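/- Let M be a loopless matroid on a finite ground set E and let ω ∈ ℝ^E. Define ω' ∈ ℝ^E by ω'_e = max over all cocircuits C* of M containing e of (min_{f ∈ C*} ω_f). Then ω'_e ≤ ω_e for all e ∈ E, and ω' is an M-ultrametric, i.e., ω' ∈ B̃(M). -/

import Mathlib

open scoped Classical

variable {α : Type*}

/-- The ω-weight of a set of elements: the sum of ω over the set. -/
noncomputable def wSum (ω : α → ℝ) (B : Set α) : ℝ := ∑ᶠ e ∈ B, ω e

/-- `B` is an ω-minimum basis of `M`: a basis whose ω-weight is minimum among all bases. -/
def IsMinBase [Fintype α] (M : Matroid α) (ω : α → ℝ) (B : Set α) : Prop :=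
  M.IsBase B ∧ ∀ B' : Set α, M.IsBase B' → wSum ω B ≤ wSum ω B'

/-- `ω` lies in the Bergman fan of `M`: every element lies in some ω-minimum basis. -/
def InBergmanFan [Fintype α] (M : Matroid α) (ω : α → ℝ) : Prop :=
  ∀ e : α, ∃ B : Set α, IsMinBase M ω B ∧ e ∈ B

/-- `C` is a circuit of `M`: a minimal dependent set. -/
def IsCircuit (M : Matroid α) (C : Set α) : Prop := Minimal M.Dep C

/-- A cocircuit of `M` is a circuit of the dual matroid `M✶`. -/
def IsCocircuit (M : Matroid α) (C : Set α) : Prop := IsCircuit M✶ C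

/-!
The maximum defining `ω'_e` is attained at a cocircuit `C ∋ e` with `ω'_e = min_C ω`, and every
`f ∈ C` has `ω'_f ≥ min_C ω`; so `e` is `ω'`-lightest on a cocircuit through it. If an
`ω'`-minimum basis `B` misses `e`, the fundamental circuit of `e` in `B` meets `C` in a second
element `f ∈ B`, and exchanging `f` for `e` gives a basis through `e` of no larger weight.
-/

open Set

namespace Matroid

variable {M : Matroid α} {B K : Set α} {e : α}

lemma IsBase.exists_isBase_insert_sdiff_of_mem_isCocircuit (hB : M.IsBase B)
    (hK : M.IsCocircuit K) (heK : e ∈ K) (heB : e ∉ B) :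
    ∃ f ∈ B ∩ K, M.IsBase (insert e B \ {f}) := by
  have heE : e ∈ M.E := hK.subset_ground heK
  have hcirc := hB.fundCircuit_isCircuit heE heB
  obtain ⟨f, ⟨hfC, hfK⟩, hfe⟩ :=
    (hcirc.isCocircuit_inter_nontrivial hK ⟨e, M.mem_fundCircuit e B, heK⟩).exists_ne e
  have hfB : f ∈ B := (M.fundCircuit_subset_insert e B hfC).resolve_left hfe
  have hindep := (hB.indep.mem_fundCircuit_iff (by rwa [hB.closure_eq]) heB).1 hfC
  exact ⟨f, ⟨hfB, hfK⟩, hB.exchange_isBase_of_indep' hfB heB hindep⟩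

end Matroid

lemma wSum_insert_sdiff_singleton [Finite α] (ω : α → ℝ) {B : Set α} {e f : α}
    (he : e ∉ B) (hf : f ∈ B) :
    wSum ω (insert e B \ {f}) = wSum ω B + ω e - ω f := by
  have hinsert : wSum ω (insert e B) = ω e + wSum ω B :=
    finsum_mem_insert ω he (toFinite B)
  have herase : wSum ω (insert e B) = ω f + wSum ω (insert e B \ {f}) := by
    rw [wSum, wSum, ← finsum_mem_insert ω (notMem_sdiff_of_mem (mem_singleton f)) (toFinite _),
      insert_sdiff_singleton, insert_eq_of_mem (mem_insert_of_mem e hf)]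
  linarith

lemma exists_isMinBase [Fintype α] (M : Matroid α) (ω : α → ℝ) : ∃ B, IsMinBase M ω B := by
  obtain ⟨B, hB, hmin⟩ :=
    exists_min_image {B | M.IsBase B} (wSum ω) (toFinite _) M.exists_isBase
  exact ⟨B, hB, hmin⟩

lemma exists_isMinBase_mem_of_isCocircuit [Fintype α] {M : Matroid α} {ω : α → ℝ} {C : Set α}
    {e : α} (hC : M.IsCocircuit C) (heC : e ∈ C) (hmin : ∀ f ∈ C, ω e ≤ ω f) :
    ∃ B, IsMinBase M ω B ∧ e ∈ B := by
  obtain ⟨B, hB, hBmin⟩ := exists_isMinBase M ω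
  by_cases heB : e ∈ B
  · exact ⟨B, ⟨hB, hBmin⟩, heB⟩
  obtain ⟨f, ⟨hfB, hfC⟩, hB'⟩ := hB.exists_isBase_insert_sdiff_of_mem_isCocircuit hC heC heB
  refine ⟨insert e B \ {f}, ⟨hB', fun B'' hB'' => ?_⟩, ?_⟩
  · rw [wSum_insert_sdiff_singleton ω heB hfB]
    linarith [hBmin B'' hB'', hmin f hfC]
  · exact ⟨mem_insert e B, fun hef => heB (hef ▸ hfB)⟩

namespace Matroid

/-- `ω'_e` is the supremum of this set. -/
def cocircuitMins (M : Matroid α) (ω : α → ℝ) (e : α) : Set ℝ :=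
  {r | ∃ C, M.IsCocircuit C ∧ e ∈ C ∧ r = sInf (ω '' C)}

variable {M : Matroid α} {ω : α → ℝ} {C : Set α} {e : α}

lemma cocircuitMins_finite [Finite α] : (M.cocircuitMins ω e).Finite :=
  (finite_range fun C : Set α => sInf (ω '' C)).subset fun _ ⟨C, _, _, hr⟩ => ⟨C, hr.symm⟩

lemma IsNonloop.cocircuitMins_nonempty (he : M.IsNonloop e) : (M.cocircuitMins ω e).Nonempty :=
  let ⟨C, hC, heC⟩ := he.exists_mem_isCocircuit
  ⟨_, C, hC, heC, rfl⟩

lemma sInf_image_le_sSup_cocircuitMins [Finite α] (hC : M.IsCocircuit C) (heC : e ∈ C) :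
    sInf (ω '' C) ≤ sSup (M.cocircuitMins ω e) :=
  le_csSup cocircuitMins_finite.bddAbove ⟨C, hC, heC, rfl⟩

lemma IsNonloop.sSup_cocircuitMins_le [Finite α] (he : M.IsNonloop e) :
    sSup (M.cocircuitMins ω e) ≤ ω e := by
  refine csSup_le he.cocircuitMins_nonempty ?_
  rintro r ⟨C, -, heC, rfl⟩
  exact csInf_le (toFinite _).bddBelow (mem_image_of_mem ω heC)

lemma IsNonloop.exists_sSup_cocircuitMins_eq [Finite α] (he : M.IsNonloop e) :
    ∃ C, M.IsCocircuit C ∧ e ∈ C ∧ sSup (M.cocircuitMins ω e) = sInf (ω '' C) :=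
  he.cocircuitMins_nonempty.csSup_mem cocircuitMins_finite

end Matroid

theorem stmt3_general [Fintype α] (M : Matroid α)
    (hloopless : ∀ e : α, M.Indep {e}) (ω ω' : α → ℝ)
    (hω' : ∀ e : α, ω' e =
      sSup {r : ℝ | ∃ C : Set α, IsCocircuit M C ∧ e ∈ C ∧ r = sInf (ω '' C)}) :
    (∀ e, ω' e ≤ ω e) ∧ InBergmanFan M ω' := by
  -- `IsCocircuit M C` unfolds to Mathlib's `M.IsCocircuit C`.
  have hω'' : ∀ e, ω' e = sSup (M.cocircuitMins ω e) := hω'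
  have hnonloop : ∀ e, M.IsNonloop e := fun e => Matroid.indep_singleton.1 (hloopless e)
  refine ⟨fun e => hω'' e ▸ (hnonloop e).sSup_cocircuitMins_le, fun e => ?_⟩
  obtain ⟨C, hC, heC, hCe⟩ := (hnonloop e).exists_sSup_cocircuitMins_eq (ω := ω)
  refine exists_isMinBase_mem_of_isCocircuit hC heC fun f hfC => ?_
  rw [hω'' e, hω'' f, hCe]
  exact Matroid.sInf_image_le_sSup_cocircuitMins hC hfC

/-- For a loopless matroid M and ω ∈ ℝ^E, the vector ω' given by
ω'_e = max over cocircuits C* containing e of (min_{f ∈ C*} ω_f) satisfies ω' ≤ ω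
componentwise and is an M-ultrametric. -/
theorem stmt3 [Fintype α] (M : Matroid α) (hE : M.E = Set.univ)
    (hloopless : ∀ e : α, M.Indep {e}) (ω ω' : α → ℝ)
    (hω' : ∀ e : α, ω' e =
      sSup {r : ℝ | ∃ C : Set α, IsCocircuit M C ∧ e ∈ C ∧ r = sInf (ω '' C)}) :
    (∀ e, ω' e ≤ ω e) ∧ InBergmanFan M ω' :=
  stmt3_general M hloopless ω ω' hω'
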